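/- Let N ≥ 5, ω = exp(2πi/N), and define ξ_{ij} ∈ ℂ^N as above. Suppose i ≠ k, j ≠ l, and (k−i)+(j−l) ≡ 0 (mod N). Then ⟨ξ_{ij}, ξ_{kl}⟩ = 1 + (2Re(ω^{k−i}) − 2)/N, and hence 1 − 4/N ≤ ⟨ξ_{ij}, ξ_{kl}⟩ < 1; in particular ⟨ξ_{ij}, ξ_{kl}⟩ is real and nonzero. -/

import Mathlib

open Complex

/-- `ω = exp(2πi/N)`. -/
noncomputable def omegaN (N : ℕ) : ℂ := Complex.exp (2 * Real.pi * Complex.I / N)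

/-- The vector `ξ_{ij} ∈ ℂ^N`: coordinate `p` (for `p = 1, …, N`, encoded as `p : Fin N`
with value `p+1`) is `ω^{1-j}/√N` if `p = 1`, `ω^{i-1}/√N` if `p = N`,
and `ω^{p(i-j)}/√N` otherwise. -/
noncomputable def xiVec (N : ℕ) (i j : ℤ) : EuclideanSpace ℂ (Fin N) :=
  WithLp.toLp 2 fun (p : Fin N) =>
    if (p : ℕ) = 0 then omegaN N ^ (1 - j) / (Real.sqrt N : ℂ)
    else if (p : ℕ) = N - 1 then omegaN N ^ (i - 1) / (Real.sqrt N : ℂ)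
    else omegaN N ^ ((((p : ℕ) : ℤ) + 1) * (i - j)) / (Real.sqrt N : ℂ)

/-! Conjugating `ξ_{ij}` against `ξ_{kl}` coordinatewise gives `ω^{j-l}/N` at `p = 1`,
`ω^{k-i}/N` at `p = N`, and `ω^{p((k-i)+(j-l))}/N = 1/N` at the `N - 2` other coordinates.
The congruence also makes `ω^{j-l} = ω^{-(k-i)}` the conjugate of `z = ω^{k-i}`, so the inner
product is `1 + (2 Re z - 2)/N`. Since `0 < |k - i| < N`, the root of unity `z` is not `1`,
whence `-1 ≤ Re z < 1`; the bounds follow, and `1 - 4/N > 0` because `N ≥ 5`. -/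

open ComplexConjugate

lemma Complex.re_lt_one_of_norm_eq_one {z : ℂ} (hz : ‖z‖ = 1) (h1 : z ≠ 1) : z.re < 1 := by
  refine (hz ▸ re_le_norm z).lt_of_ne fun hre => h1 (Complex.ext hre ?_)
  exact abs_re_eq_norm.1 (by rw [hre, hz, abs_one])

lemma Complex.neg_one_le_re_of_norm_eq_one {z : ℂ} (hz : ‖z‖ = 1) : -1 ≤ z.re :=
  hz ▸ (abs_le.1 (abs_re_le_norm z)).1

lemma Fin.sum_ite_zero_ite_last {M : Type*} [AddCommMonoid M] {N : ℕ} (hN : 2 ≤ N) (a b c : M) :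
    ∑ p : Fin N, (if (p : ℕ) = 0 then a else if (p : ℕ) = N - 1 then b else c) =
      a + b + (N - 2) • c := by
  obtain ⟨n, rfl⟩ : ∃ n, N = n + 2 := ⟨N - 2, by omega⟩
  have hlt (x : Fin n) : (x : ℕ) ≠ n := x.is_lt.ne
  rw [Fin.sum_univ_succ, Fin.sum_univ_castSucc]
  simp [hlt, add_assoc, add_comm (n • c)]

lemma omegaN_ne_zero (N : ℕ) : omegaN N ≠ 0 := Complex.exp_ne_zero _

lemma norm_omegaN (N : ℕ) : ‖omegaN N‖ = 1 := by
  simp [omegaN, Complex.norm_exp]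

lemma isPrimitiveRoot_omegaN {N : ℕ} (hN : N ≠ 0) : IsPrimitiveRoot (omegaN N) N :=
  Complex.isPrimitiveRoot_exp N hN

lemma omegaN_zpow_ne_one {N : ℕ} {m : ℤ} (hm : m ≠ 0) (hmN : |m| < N) : omegaN N ^ m ≠ 1 := by
  have hN : N ≠ 0 := by rintro rfl; exact (abs_nonneg m).not_gt (by simpa using hmN)
  exact fun h => hm <| Int.eq_zero_of_abs_lt_dvd
    (((isPrimitiveRoot_omegaN hN).zpow_eq_one_iff_dvd m).1 h) hmN

lemma conj_omegaN_zpow (N : ℕ) (m : ℤ) : conj (omegaN N ^ m) = omegaN N ^ (-m) := by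
  rw [map_zpow₀, ← inv_eq_conj (norm_omegaN N), inv_zpow', zpow_neg]

lemma conj_omegaN_zpow_mul_zpow (N : ℕ) (a b : ℤ) :
    conj (omegaN N ^ a) * omegaN N ^ b = omegaN N ^ (b - a) := by
  rw [conj_omegaN_zpow, ← zpow_add₀ (omegaN_ne_zero N), neg_add_eq_sub]

lemma xiVec_mul_conj_xiVec (N : ℕ) (i j k l : ℤ) (p : Fin N) :
    xiVec N k l p * conj (xiVec N i j p) =
      (if (p : ℕ) = 0 then omegaN N ^ (j - l)
        else if (p : ℕ) = N - 1 then omegaN N ^ (k - i)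
        else omegaN N ^ ((((p : ℕ) : ℤ) + 1) * ((k - i) + (j - l)))) / N := by
  have hsqrt : (Real.sqrt N : ℂ) * Real.sqrt N = N := by
    rw [← ofReal_mul, Real.mul_self_sqrt N.cast_nonneg, ofReal_natCast]
  have hcoord (a b : ℤ) : omegaN N ^ b / Real.sqrt N * conj (omegaN N ^ a / Real.sqrt N) =
      omegaN N ^ (b - a) / N := by
    rw [mul_comm, map_div₀, conj_ofReal, div_mul_div_comm, hsqrt, conj_omegaN_zpow_mul_zpow]
  simp only [xiVec, PiLp.toLp_apply]
  split_ifs <;> rw [hcoord] <;> ring_nf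

lemma inner_xiVec_of_dvd {N : ℕ} (hN : 2 ≤ N) {i j k l : ℤ} (hmod : (N : ℤ) ∣ (k - i) + (j - l)) :
    (inner ℂ (xiVec N i j) (xiVec N k l) : ℂ) =
      1 + (((2 * (omegaN N ^ (k - i)).re - 2) / N : ℝ) : ℂ) := by
  have hone (m : ℤ) : omegaN N ^ (m * ((k - i) + (j - l))) = 1 :=
    ((isPrimitiveRoot_omegaN (by omega)).zpow_eq_one_iff_dvd _).2 (hmod.mul_left m)
  have hconj : omegaN N ^ (j - l) = conj (omegaN N ^ (k - i)) := by
    calc omegaN N ^ (j - l) = omegaN N ^ (-(k - i)) * omegaN N ^ (1 * ((k - i) + (j - l))) := by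
          rw [← zpow_add₀ (omegaN_ne_zero N)]; ring_nf
      _ = conj (omegaN N ^ (k - i)) := by rw [hone, mul_one, conj_omegaN_zpow]
  simp only [PiLp.inner_apply, RCLike.inner_apply, xiVec_mul_conj_xiVec, hone, ← Finset.sum_div,
    Fin.sum_ite_zero_ite_last hN, hconj, add_comm (conj _), add_conj]
  have hN0 : (N : ℂ) ≠ 0 := by norm_cast; omega
  rw [nsmul_one, Nat.cast_sub hN]
  push_cast
  field_simp
  ring

theorem xiVec_inner_case_one_general (N : ℕ) (hN : 5 ≤ N) (i j k l : ℤ)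
    (hi1 : 1 ≤ i) (hiN : i ≤ N)
    (hk1 : 1 ≤ k) (hkN : k ≤ N)
    (hik : i ≠ k) (hmod : (N : ℤ) ∣ (k - i) + (j - l)) :
    (inner ℂ (xiVec N i j) (xiVec N k l) : ℂ) =
        1 + (((2 * (omegaN N ^ (k - i)).re - 2) / N : ℝ) : ℂ)
    ∧ 1 - 4 / (N : ℝ) ≤ (inner ℂ (xiVec N i j) (xiVec N k l) : ℂ).re
    ∧ (inner ℂ (xiVec N i j) (xiVec N k l) : ℂ).re < 1
    ∧ (inner ℂ (xiVec N i j) (xiVec N k l) : ℂ).im = 0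
    ∧ (inner ℂ (xiVec N i j) (xiVec N k l) : ℂ) ≠ 0 := by
  have hinner := inner_xiVec_of_dvd (by omega) hmod
  have hnorm : ‖omegaN N ^ (k - i)‖ = 1 := by rw [norm_zpow, norm_omegaN, one_zpow]
  set c := (omegaN N ^ (k - i)).re
  have hc_lt : c < 1 := Complex.re_lt_one_of_norm_eq_one hnorm
    (omegaN_zpow_ne_one (sub_ne_zero.2 hik.symm) (abs_sub_lt_iff.2 ⟨by omega, by omega⟩))
  have hc_ge : -1 ≤ c := Complex.neg_one_le_re_of_norm_eq_one hnorm
  have hNpos : (0 : ℝ) < N := by norm_cast; omega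
  have hlower : 1 - 4 / (N : ℝ) ≤ 1 + (2 * c - 2) / N := by
    rw [sub_eq_add_neg, ← neg_div]
    gcongr
    linarith
  have hpos : 0 < 1 - 4 / (N : ℝ) := sub_pos.2 ((div_lt_one hNpos).2 (by norm_cast))
  have hre : (inner ℂ (xiVec N i j) (xiVec N k l) : ℂ).re = 1 + (2 * c - 2) / N := by
    simp [hinner]
  refine ⟨hinner, hre ▸ hlower, ?_, by simp [hinner], fun h => ?_⟩
  · rw [hre]
    linarith [div_neg_of_neg_of_pos (by linarith : 2 * c - 2 < 0) hNpos]
  · rw [h, zero_re] at hre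
    linarith

theorem xiVec_inner_case_one (N : ℕ) (hN : 5 ≤ N) (i j k l : ℤ)
    (hi1 : 1 ≤ i) (hiN : i ≤ N) (hj1 : 1 ≤ j) (hjN : j ≤ N)
    (hk1 : 1 ≤ k) (hkN : k ≤ N) (hl1 : 1 ≤ l) (hlN : l ≤ N)
    (hik : i ≠ k) (hjl : j ≠ l) (hmod : (N : ℤ) ∣ (k - i) + (j - l)) :
    (inner ℂ (xiVec N i j) (xiVec N k l) : ℂ) =
        1 + (((2 * (omegaN N ^ (k - i)).re - 2) / N : ℝ) : ℂ)
    ∧ 1 - 4 / (N : ℝ) ≤ (inner ℂ (xiVec N i j) (xiVec N k l) : ℂ).re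
    ∧ (inner ℂ (xiVec N i j) (xiVec N k l) : ℂ).re < 1
    ∧ (inner ℂ (xiVec N i j) (xiVec N k l) : ℂ).im = 0
    ∧ (inner ℂ (xiVec N i j) (xiVec N k l) : ℂ) ≠ 0 :=
  xiVec_inner_case_one_general N hN i j k l hi1 hiN hk1 hkN hik hmod
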